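/- For v = (gx + hy)^8 with (g,h) ≠ (0,0), the rank of the 9×9 matrix J(v) equals 2. More generally, if v = c·(gx+hy)^8 is a nonzero octic with exactly one distinct root, then rank J(v) = 2, and the column space of J(v) is spanned by the column vectors corresponding to λ+16φ_0 and φ_2-type directions, which coincides with the tangent space at v to the cone {c(gx+hy)^8}. -/

import Mathlib

noncomputable section

variable {K : Type*} [CommRing K]

/-- The ω⁻⁴ column of J (common factor 9216 removed), from Appendix A. -/
def c0 (t : Fin 9 → K) : Fin 9 → K :=
  ![280*t 0*t 6 - 280*t 1*t 5,
    -245*t 2*t 5 + 70*t 0*t 7 + 175*t 1*t 6,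
    70*t 2*t 6 - 210*t 3*t 5 + 130*t 1*t 7 + 10*t 0*t 8,
    -175*t 4*t 5 - 35*t 3*t 6 + 35*t 1*t 8 + 175*t 2*t 7,
    84*t 2*t 8 + 196*t 3*t 7 - 140*t 5^2 - 140*t 4*t 6,
    -350*t 5*t 6 + 175*t 4*t 7 + 175*t 3*t 8,
    350*t 4*t 8 - 350*t 6^2,
    700*t 5*t 8 - 700*t 7*t 6,
    -1400*t 7^2 + 1400*t 8*t 6]

/-- The ω⁻² column of J (common factor 9216 removed). -/
def c1 (t : Fin 9 → K) : Fin 9 → K :=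
  ![-1400*t 0*t 5 + 1400*t 1*t 4,
    -385*t 0*t 6 - 840*t 1*t 5 + 1225*t 2*t 4,
    -280*t 2*t 5 + 1050*t 3*t 4 - 70*t 0*t 7 - 700*t 1*t 6,
    -910*t 2*t 6 + 280*t 3*t 5 + 875*t 4^2 - 240*t 1*t 7 - 5*t 0*t 8,
    1540*t 4*t 5 - 952*t 3*t 6 - 28*t 1*t 8 - 560*t 2*t 7,
    -105*t 2*t 8 - 1120*t 3*t 7 + 1400*t 5^2 - 175*t 4*t 6,
    2100*t 5*t 6 - 1750*t 4*t 7 - 350*t 3*t 8,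
    2450*t 6^2 - 1050*t 4*t 8 - 1400*t 5*t 7,
    -2800*t 5*t 8 + 2800*t 7*t 6]

/-- The ω⁰ column of J (common factor 9216 removed). -/
def c2 (t : Fin 9 → K) : Fin 9 → K :=
  ![-2800*t 1*t 3 + 2800*t 0*t 4,
    -2450*t 2*t 3 + 875*t 0*t 5 + 1575*t 1*t 4,
    210*t 0*t 6 - 2100*t 3^2 + 1540*t 1*t 5 + 350*t 2*t 4,
    1890*t 2*t 5 - 2625*t 3*t 4 + 35*t 0*t 7 + 700*t 1*t 6,
    1568*t 2*t 6 + 336*t 3*t 5 - 2100*t 4^2 + 192*t 1*t 7 + 4*t 0*t 8,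
    -2625*t 4*t 5 + 1890*t 3*t 6 + 35*t 1*t 8 + 700*t 2*t 7,
    210*t 2*t 8 + 1540*t 3*t 7 - 2100*t 5^2 + 350*t 4*t 6,
    -2450*t 5*t 6 + 1575*t 4*t 7 + 875*t 3*t 8,
    2800*t 4*t 8 - 2800*t 5*t 7]

/-- The ω² column of J (common factor 9216 removed). -/
def c3 (t : Fin 9 → K) : Fin 9 → K :=
  ![2800*t 2*t 1 - 2800*t 3*t 0,
    -1400*t 1*t 3 - 1050*t 0*t 4 + 2450*t 2^2,
    2100*t 2*t 3 - 350*t 0*t 5 - 1750*t 1*t 4,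
    -105*t 0*t 6 + 1400*t 3^2 - 1120*t 1*t 5 - 175*t 2*t 4,
    -952*t 2*t 5 + 1540*t 3*t 4 - 28*t 0*t 7 - 560*t 1*t 6,
    -910*t 2*t 6 + 280*t 3*t 5 + 875*t 4^2 - 240*t 1*t 7 - 5*t 0*t 8,
    1050*t 4*t 5 - 280*t 3*t 6 - 70*t 1*t 8 - 700*t 2*t 7,
    1225*t 4*t 6 - 385*t 2*t 8 - 840*t 3*t 7,
    1400*t 4*t 7 - 1400*t 3*t 8]

/-- The ω⁴ column of J (common factor 9216 removed). -/
def c4 (t : Fin 9 → K) : Fin 9 → K :=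
  ![1400*t 2*t 0 - 1400*t 1^2,
    -700*t 2*t 1 + 700*t 3*t 0,
    -350*t 2^2 + 350*t 0*t 4,
    -350*t 2*t 3 + 175*t 0*t 5 + 175*t 1*t 4,
    84*t 0*t 6 - 140*t 3^2 + 196*t 1*t 5 - 140*t 2*t 4,
    -35*t 2*t 5 - 175*t 3*t 4 + 35*t 0*t 7 + 175*t 1*t 6,
    70*t 2*t 6 - 210*t 3*t 5 + 130*t 1*t 7 + 10*t 0*t 8,
    70*t 1*t 8 - 245*t 3*t 6 + 175*t 2*t 7,
    -280*t 3*t 7 + 280*t 2*t 8]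

/-- The λ column of J. -/
def c5 (t : Fin 9 → K) : Fin 9 → K := t

/-- The φ₋₂ column of J. -/
def c6 (t : Fin 9 → K) : Fin 9 → K :=
  ![-16*t 1, -14*t 2, -12*t 3, -10*t 4, -8*t 5, -6*t 6, -4*t 7, -2*t 8, 0]

/-- The φ₀ column of J. -/
def c7 (t : Fin 9 → K) : Fin 9 → K :=
  ![16*t 0, 12*t 1, 8*t 2, 4*t 3, 0, -4*t 5, -8*t 6, -12*t 7, -16*t 8]

/-- The φ₂ column of J. -/
def c8 (t : Fin 9 → K) : Fin 9 → K :=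
  ![0, 2*t 0, 4*t 1, 6*t 2, 8*t 3, 10*t 4, 12*t 5, 14*t 6, 16*t 7]

/-- The 9×9 matrix J(T) from Appendix A of the paper (the factor 9216 = 2¹⁰3²
is restored on the five ω-columns). -/
def Jmat (t : Fin 9 → K) : Matrix (Fin 9) (Fin 9) K :=
  Matrix.of fun i j =>
    (![fun i' => (9216 : K) * c0 t i', fun i' => (9216 : K) * c1 t i',
       fun i' => (9216 : K) * c2 t i', fun i' => (9216 : K) * c3 t i',
       fun i' => (9216 : K) * c4 t i',
       c5 t, c6 t, c7 t, c8 t] j) i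

/-- The coefficient vector (binomial basis) of c·(gx+hy)⁸. -/
def pow8Vec (c g h : ℝ) : Fin 9 → ℝ := fun k =>
  c * g ^ (8 - (k : ℕ)) * h ^ (k : ℕ)

/-- The coefficient vector (binomial basis) of 8(Gx+Hy)(gx+hy)⁷, a tangent
vector at (gx+hy)⁸ to the cone of perfect 8th powers. -/
def tvec (g h G H : ℝ) : Fin 9 → ℝ := fun k =>
  (8 - (k : ℕ)) * G * g ^ (7 - (k : ℕ)) * h ^ (k : ℕ)
    + (k : ℕ) * H * g ^ (8 - (k : ℕ)) * h ^ ((k : ℕ) - 1)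

/-!
At `v = c(gx+hy)⁸` the five quadratic ω-columns of `J(v)` vanish, while the λ- and φ-columns are
combinations of the two tangent vectors `T₁ = 8x(gx+hy)⁷` and `T₂ = 8y(gx+hy)⁷`. Conversely the
three φ-columns `-2ch T₁`, `2cg T₁ - 2ch T₂`, `2cg T₂` recover `T₁` and `T₂`, because
`(2cg)² + (2ch)² ≠ 0`. Finally `T₁` and `T₂` are independent as soon as `(g, h) ≠ (0, 0)`, as one
sees on their two extreme coefficients, so the column space of `J(v)` is the 2-dimensional tangent
space.
-/

lemma finrank_span_pair {K V : Type*} [DivisionRing K] [AddCommGroup V] [Module K V] {x y : V}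
    (hxy : LinearIndependent K ![x, y]) : Module.finrank K (Submodule.span K {x, y}) = 2 := by
  have h := finrank_span_eq_card hxy
  rwa [Matrix.range_cons_cons_empty, Fintype.card_fin] at h

lemma span_pair_le_span_triple {K V : Type*} [Field K] [AddCommGroup V] [Module K V]
    {a b : K} (hab : a * a + b * b ≠ 0) (u w : V) :
    Submodule.span K {u, w} ≤ Submodule.span K {b • u, a • u + b • w, a • w} := by
  set S := Submodule.span K {b • u, a • u + b • w, a • w}
  have hbu : b • u ∈ S := Submodule.subset_span (by simp)
  have hmid : a • u + b • w ∈ S := Submodule.subset_span (by simp)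
  have haw : a • w ∈ S := Submodule.subset_span (by simp)
  rw [Submodule.span_le, Set.insert_subset_iff, Set.singleton_subset_iff]
  constructor
  · rw [SetLike.mem_coe, ← Submodule.smul_mem_iff S hab]
    convert S.add_mem (S.sub_mem (S.smul_mem a hmid) (S.smul_mem b haw)) (S.smul_mem b hbu)
      using 1
    module
  · rw [SetLike.mem_coe, ← Submodule.smul_mem_iff S hab]
    convert S.sub_mem (S.add_mem (S.smul_mem a haw) (S.smul_mem b hmid)) (S.smul_mem a hbu)
      using 1
    module

lemma col_Jmat {K : Type*} [CommRing K] (t : Fin 9 → K) :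
    (Jmat t).col = ![(9216 : K) • c0 t, (9216 : K) • c1 t, (9216 : K) • c2 t, (9216 : K) • c3 t,
      (9216 : K) • c4 t, c5 t, c6 t, c7 t, c8 t] := by
  ext j i
  fin_cases j <;> rfl

lemma tvec_eq_add (g h G H : ℝ) : tvec g h G H = G • tvec g h 1 0 + H • tvec g h 0 1 := by
  ext k
  simp only [tvec, Pi.add_apply, Pi.smul_apply, smul_eq_mul]
  ring

lemma setOf_tvec_eq_span (g h : ℝ) :
    {x : Fin 9 → ℝ | ∃ G H : ℝ, x = tvec g h G H}
      = (Submodule.span ℝ {tvec g h 1 0, tvec g h 0 1} : Set (Fin 9 → ℝ)) := by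
  ext x
  rw [Set.mem_ofPred_eq, SetLike.mem_coe, Submodule.mem_span_pair]
  exact exists_congr fun G => exists_congr fun H => by rw [tvec_eq_add, eq_comm]

lemma linearIndependent_tvec (g h : ℝ) (hgh : ¬(g = 0 ∧ h = 0)) :
    LinearIndependent ℝ ![tvec g h 1 0, tvec g h 0 1] := by
  rw [LinearIndependent.pair_iff]
  intro s t hst
  have coord (k : Fin 9) := congrFun hst k
  by_cases hg : g = 0
  · have hh : h ≠ 0 := fun hh => hgh ⟨hg, hh⟩
    have h7 := coord 7
    have h8 := coord 8
    norm_num [tvec, hg, hh] at h7 h8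
    exact ⟨h7, h8⟩
  · have h0 := coord 0
    have h1 := coord 1
    norm_num [tvec, hg] at h0 h1
    exact ⟨h0, by simpa [h0, hg] using h1⟩

section ColumnsAtEighthPower

variable (c g h : ℝ)

lemma omega_columns_pow8Vec_eq_zero :
    c0 (pow8Vec c g h) = 0 ∧ c1 (pow8Vec c g h) = 0 ∧ c2 (pow8Vec c g h) = 0 ∧
      c3 (pow8Vec c g h) = 0 ∧ c4 (pow8Vec c g h) = 0 := by
  refine ⟨?_, ?_, ?_, ?_, ?_⟩ <;> ext i <;> fin_cases i <;>
    simp [c0, c1, c2, c3, c4, pow8Vec] <;> ring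

lemma c5_pow8Vec :
    c5 (pow8Vec c g h) = (c * g / 8) • tvec g h 1 0 + (c * h / 8) • tvec g h 0 1 := by
  ext i; fin_cases i <;> simp [c5, pow8Vec, tvec] <;> ring

lemma c6_pow8Vec : c6 (pow8Vec c g h) = (-(2 * c * h)) • tvec g h 1 0 := by
  ext i; fin_cases i <;> simp [c6, pow8Vec, tvec] <;> ring

lemma c7_pow8Vec :
    c7 (pow8Vec c g h) = (2 * c * g) • tvec g h 1 0 + (-(2 * c * h)) • tvec g h 0 1 := by
  ext i; fin_cases i <;> simp [c7, pow8Vec, tvec] <;> ring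

lemma c8_pow8Vec : c8 (pow8Vec c g h) = (2 * c * g) • tvec g h 0 1 := by
  ext i; fin_cases i <;> simp [c8, pow8Vec, tvec] <;> ring

lemma span_range_col_Jmat_pow8Vec :
    Submodule.span ℝ (Set.range (Jmat (pow8Vec c g h)).col) = Submodule.span ℝ
      {c5 (pow8Vec c g h), c6 (pow8Vec c g h), c7 (pow8Vec c g h), c8 (pow8Vec c g h)} := by
  obtain ⟨h0, h1, h2, h3, h4⟩ := omega_columns_pow8Vec_eq_zero c g h
  rw [col_Jmat, h0, h1, h2, h3, h4, smul_zero]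
  simp only [Matrix.range_cons, Matrix.range_empty, Set.union_empty, Set.singleton_union,
    Set.insert_idem, Submodule.span_insert_zero]

lemma span_columns_pow8Vec_eq_span_tvec (hc : c ≠ 0) (hgh : ¬(g = 0 ∧ h = 0)) :
    Submodule.span ℝ
      {c5 (pow8Vec c g h), c6 (pow8Vec c g h), c7 (pow8Vec c g h), c8 (pow8Vec c g h)}
      = Submodule.span ℝ {tvec g h 1 0, tvec g h 0 1} := by
  rw [c5_pow8Vec, c6_pow8Vec, c7_pow8Vec, c8_pow8Vec]
  apply le_antisymm
  · simp only [Submodule.span_le, Set.insert_subset_iff, Set.singleton_subset_iff,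
      SetLike.mem_coe, Submodule.mem_span_pair]
    exact ⟨⟨_, _, rfl⟩, ⟨-(2 * c * h), 0, by simp⟩, ⟨_, _, rfl⟩, ⟨0, 2 * c * g, by simp⟩⟩
  · have hsq : 2 * c * g * (2 * c * g) + -(2 * c * h) * -(2 * c * h) ≠ 0 := by
      rw [Ne, mul_self_add_mul_self_eq_zero]
      simpa [hc] using hgh
    exact (span_pair_le_span_triple hsq _ _).trans (Submodule.span_mono (Set.subset_insert _ _))

end ColumnsAtEighthPower

theorem rank_J_at_eighth_power (c g h : ℝ) (hc : c ≠ 0) (hgh : ¬(g = 0 ∧ h = 0)) :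
    (Jmat (pow8Vec c g h)).rank = 2 ∧
    LinearMap.range (Jmat (pow8Vec c g h)).mulVecLin
      = Submodule.span ℝ {x : Fin 9 → ℝ | ∃ G H : ℝ, x = tvec g h G H} := by
  have hrange : LinearMap.range (Jmat (pow8Vec c g h)).mulVecLin
      = Submodule.span ℝ {tvec g h 1 0, tvec g h 0 1} := by
    rw [Matrix.range_mulVecLin, span_range_col_Jmat_pow8Vec,
      span_columns_pow8Vec_eq_span_tvec c g h hc hgh]
  constructor
  · rw [Matrix.rank, hrange, finrank_span_pair (linearIndependent_tvec g h hgh)]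
  · rw [hrange, setOf_tvec_eq_span, Submodule.span_eq]
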